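/- Let n ≥ 3, p > 2n, α = 1 − n/p, T > 0, and M > 0. Let u : (0,T) × ℝ^n → ℝ be measurable with |u(τ,y)| ≤ M τ^{−n/(2p)} |y|^{−α} for all τ ∈ (0,T) and y ≠ 0. Define ū(t,x) := ∫₀^t ∫_{ℝ^n} (|x − y| + (t − τ)^{1/2})^{−(n+1)} u(τ,y)² dy dτ. Then there exists a constant c > 0, depending only on n and p and independent of u and M, such that for all t ∈ (0,T) and all x ≠ 0: ū(t,x) ≤ c · M² · |x|^{−2 + 2n/p} · t^{1/2 − n/p}; consequently the weak-L^{np/(2(p−n))} quasinorm satisfies ‖ū(t,·)‖_{(np/(2(p−n)), ∞)} ≤ c M² t^{1/2 − n/p}. -/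

import Mathlib

open MeasureTheory ENNReal

/-- The weak-`L^r` (Lorentz `L(r,∞)`) quasinorm
`sup_{λ>0} λ · μ{x : |g x| > λ}^{1/r}` of a real-valued function. -/
noncomputable def weakNorm {X : Type*} [MeasurableSpace X] (μ : Measure X) (r : ℝ)
    (g : X → ℝ) : ℝ≥0∞ :=
  ⨆ (l : ℝ) (_ : 0 < l), ENNReal.ofReal l * μ {x | l < |g x|} ^ (1 / r)

/-- The nonlinear Oseen-type term
`ū(t,x) = ∫₀^t ∫ (|x-y|+(t-τ)^{1/2})^{-(n+1)} u(τ,y)² dy dτ` (in `ℝ≥0∞`). -/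
noncomputable def uBar (n : ℕ) (u : ℝ → EuclideanSpace ℝ (Fin n) → ℝ)
    (t : ℝ) (x : EuclideanSpace ℝ (Fin n)) : ℝ≥0∞ :=
  ∫⁻ τ in Set.Ioo 0 t, ∫⁻ y, ENNReal.ofReal
    ((‖x - y‖ + (t - τ) ^ ((1 : ℝ) / 2)) ^ (-((n : ℝ) + 1)) * u τ y ^ 2)

section Stmt18Aux

open Set Metric

/-- Scaling of Lebesgue integrals on Euclidean space under dilation. -/
lemma stmt18_lint_smul (n : ℕ) (f : EuclideanSpace ℝ (Fin n) → ℝ≥0∞) (hf : Measurable f)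
    {R : ℝ} (hR : 0 < R) :
    ∫⁻ x, f x = ENNReal.ofReal (R ^ n) * ∫⁻ x, f (R • x) := by
  have h := lintegral_map (μ := (volume : Measure (EuclideanSpace ℝ (Fin n)))) hf
    (by fun_prop : Measurable fun x : EuclideanSpace ℝ (Fin n) => R • x)
  rw [Measure.map_addHaar_smul volume hR.ne', lintegral_smul_measure,
    finrank_euclideanSpace_fin] at h
  have hRn : (0:ℝ) < R ^ n := pow_pos hR n
  rw [← h, smul_eq_mul, ← mul_assoc, ← ENNReal.ofReal_mul hRn.le,
    abs_of_nonneg (inv_nonneg.2 hRn.le), mul_inv_cancel₀ hRn.ne', ofReal_one, one_mul]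

/-- Total mass of the unit kernel. -/
noncomputable def stmt18K1 (n : ℕ) : ℝ≥0∞ :=
  ∫⁻ z : EuclideanSpace ℝ (Fin n), ENNReal.ofReal ((‖z‖ + 1) ^ (-((n:ℝ)+1)))

lemma stmt18K1_lt_top (n : ℕ) : stmt18K1 n < ⊤ := by
  have h : ((Module.finrank ℝ (EuclideanSpace ℝ (Fin n)) : ℝ)) < (n:ℝ)+1 := by
    rw [finrank_euclideanSpace_fin]; linarith
  have h2 := finite_integral_one_add_norm (E := EuclideanSpace ℝ (Fin n)) (μ := volume) h
  unfold stmt18K1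
  convert h2 using 4 with z
  rw [add_comm]

lemma stmt18_kernel_mass (n : ℕ) {s : ℝ} (hs : 0 < s) :
    ∫⁻ z : EuclideanSpace ℝ (Fin n), ENNReal.ofReal ((‖z‖ + s) ^ (-((n:ℝ)+1)))
      = ENNReal.ofReal (s⁻¹) * stmt18K1 n := by
  have hf : Measurable fun z : EuclideanSpace ℝ (Fin n) =>
      ENNReal.ofReal ((‖z‖ + s) ^ (-((n:ℝ)+1))) := by fun_prop
  rw [stmt18_lint_smul n _ hf hs]
  have key : ∀ x : EuclideanSpace ℝ (Fin n), ENNReal.ofReal ((‖s • x‖ + s) ^ (-((n:ℝ)+1)))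
      = ENNReal.ofReal (s ^ (-((n:ℝ)+1))) * ENNReal.ofReal ((‖x‖ + 1) ^ (-((n:ℝ)+1))) := by
    intro x
    rw [norm_smul, Real.norm_eq_abs, abs_of_pos hs,
      show s * ‖x‖ + s = s * (‖x‖ + 1) by ring,
      Real.mul_rpow hs.le (by positivity), ENNReal.ofReal_mul (by positivity)]
  simp_rw [key]
  rw [lintegral_const_mul' _ _ ofReal_ne_top, ← mul_assoc, ← ENNReal.ofReal_mul (by positivity)]
  have : s ^ n * s ^ (-((n:ℝ)+1)) = s⁻¹ := by
    rw [← Real.rpow_natCast s n, ← Real.rpow_add hs,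
      show (n:ℝ) + -((n:ℝ)+1) = -1 by ring, Real.rpow_neg_one]
  rw [this]
  rfl

/-- Mass of the singular weight on the unit ball. -/
noncomputable def stmt18K2 (n : ℕ) (β : ℝ) : ℝ≥0∞ :=
  ∫⁻ y in ball (0 : EuclideanSpace ℝ (Fin n)) 1, ENNReal.ofReal (‖y‖ ^ (-β))

lemma stmt18_ball_mass (n : ℕ) (β : ℝ) {R : ℝ} (hR : 0 < R) :
    ∫⁻ y in ball (0 : EuclideanSpace ℝ (Fin n)) R, ENNReal.ofReal (‖y‖ ^ (-β))
      = ENNReal.ofReal (R ^ ((n:ℝ) - β)) * stmt18K2 n β := by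
  set g : EuclideanSpace ℝ (Fin n) → ℝ≥0∞ := fun y => ENNReal.ofReal (‖y‖ ^ (-β)) with hg
  have hgm : Measurable g := by fun_prop
  have hf : Measurable ((ball (0 : EuclideanSpace ℝ (Fin n)) R).indicator g) :=
    hgm.indicator measurableSet_ball
  have h1 : ∫⁻ y in ball (0 : EuclideanSpace ℝ (Fin n)) R, g y
      = ∫⁻ y, (ball (0 : EuclideanSpace ℝ (Fin n)) R).indicator g y := by
    rw [lintegral_indicator measurableSet_ball]
  rw [h1, stmt18_lint_smul n _ hf hR]
  have key : ∀ x : EuclideanSpace ℝ (Fin n),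
      (ball (0 : EuclideanSpace ℝ (Fin n)) R).indicator g (R • x)
      = (ball (0 : EuclideanSpace ℝ (Fin n)) 1).indicator
          (fun x => ENNReal.ofReal (R ^ (-β)) * g x) x := by
    intro x
    have hmem : R • x ∈ ball (0 : EuclideanSpace ℝ (Fin n)) R
        ↔ x ∈ ball (0 : EuclideanSpace ℝ (Fin n)) 1 := by
      simp only [mem_ball, dist_zero_right, norm_smul, Real.norm_eq_abs, abs_of_pos hR]
      constructor
      · intro h; nlinarith
      · intro h; nlinarith
    by_cases hx : x ∈ ball (0 : EuclideanSpace ℝ (Fin n)) 1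
    · rw [indicator_of_mem (hmem.2 hx), indicator_of_mem hx]
      simp only [hg]
      rw [norm_smul, Real.norm_eq_abs, abs_of_pos hR,
        Real.mul_rpow hR.le (norm_nonneg _), ENNReal.ofReal_mul (by positivity)]
    · rw [indicator_of_notMem (fun h => hx (hmem.1 h)), indicator_of_notMem hx]
  simp_rw [key]
  rw [lintegral_indicator measurableSet_ball,
    lintegral_const_mul' _ _ ofReal_ne_top, ← mul_assoc,
    ← ENNReal.ofReal_mul (by positivity), ← stmt18K2]
  congr 2
  rw [← Real.rpow_natCast R n, ← Real.rpow_add hR]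
  ring_nf

lemma stmt18K2_lt_top (n : ℕ) (hn : 1 ≤ n) {β : ℝ} (hβ0 : 0 < β) (hβn : β < n) :
    stmt18K2 n β < ⊤ := by
  have : Nonempty (Fin n) := ⟨⟨0, hn⟩⟩
  set μ := (volume : Measure (EuclideanSpace ℝ (Fin n))).restrict
    (ball (0 : EuclideanSpace ℝ (Fin n)) 1) with hμ
  have hlc : stmt18K2 n β
      = ∫⁻ t in Ioi (0:ℝ), μ {y : EuclideanSpace ℝ (Fin n) | t < ‖y‖ ^ (-β)} := by
    rw [stmt18K2, ← lintegral_eq_lintegral_meas_lt μ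
      (ae_of_all _ fun y => Real.rpow_nonneg (norm_nonneg y) _) (by fun_prop)]
  rw [hlc]
  set vb := volume (ball (0 : EuclideanSpace ℝ (Fin n)) 1) with hvb
  have hvbfin : vb < ⊤ := measure_ball_lt_top
  have hle1 : ∀ t : ℝ, μ {y : EuclideanSpace ℝ (Fin n) | t < ‖y‖ ^ (-β)} ≤ vb := by
    intro t
    calc μ {y : EuclideanSpace ℝ (Fin n) | t < ‖y‖ ^ (-β)} ≤ μ univ :=
          measure_mono (subset_univ _)
    _ = vb := by rw [hμ, Measure.restrict_apply_univ]
  have hle2 : ∀ t : ℝ, 0 < t →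
      μ {y : EuclideanSpace ℝ (Fin n) | t < ‖y‖ ^ (-β)}
        ≤ ENNReal.ofReal (t ^ (-(n:ℝ)/β)) * vb := by
    intro t ht
    have hsub : {y : EuclideanSpace ℝ (Fin n) | t < ‖y‖ ^ (-β)}
        ⊆ closedBall 0 (t ^ (-1/β)) := by
      intro y hy
      simp only [mem_setOf_eq] at hy
      rw [mem_closedBall, dist_zero_right]
      by_contra hcon
      push_neg at hcon
      have htpos : (0:ℝ) < t ^ (-1/β) := Real.rpow_pos_of_pos ht _
      have h2 : ‖y‖ ^ (-β) < (t ^ (-1/β)) ^ (-β) :=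
        Real.rpow_lt_rpow_of_neg htpos hcon (by linarith)
      rw [← Real.rpow_mul ht.le] at h2
      have he : (-1/β) * (-β) = 1 := by field_simp
      rw [he, Real.rpow_one] at h2
      linarith
    calc μ {y : EuclideanSpace ℝ (Fin n) | t < ‖y‖ ^ (-β)}
        ≤ μ (closedBall 0 (t ^ (-1/β))) := measure_mono hsub
      _ ≤ volume (closedBall (0 : EuclideanSpace ℝ (Fin n)) (t ^ (-1/β))) := by
          rw [hμ]; exact Measure.restrict_le_self _
      _ = ENNReal.ofReal ((t ^ (-1/β)) ^ Module.finrank ℝ (EuclideanSpace ℝ (Fin n))) * vb := by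
          rw [Measure.addHaar_closedBall _ _ (Real.rpow_pos_of_pos ht _).le]
      _ = ENNReal.ofReal (t ^ (-(n:ℝ)/β)) * vb := by
          congr 2
          rw [finrank_euclideanSpace_fin, ← Real.rpow_natCast (t ^ (-1/β)) n,
            ← Real.rpow_mul ht.le]
          congr 1
          field_simp
  have hsplit : Ioi (0:ℝ) = Ioc (0:ℝ) 1 ∪ Ioi 1 := (Ioc_union_Ioi_eq_Ioi zero_le_one).symm
  rw [hsplit, lintegral_union measurableSet_Ioi (Ioc_disjoint_Ioi le_rfl)]
  have hp1 : ∫⁻ t in Ioc (0:ℝ) 1, μ {y : EuclideanSpace ℝ (Fin n) | t < ‖y‖ ^ (-β)} ≤ vb := by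
    calc ∫⁻ t in Ioc (0:ℝ) 1, μ {y : EuclideanSpace ℝ (Fin n) | t < ‖y‖ ^ (-β)}
        ≤ ∫⁻ _ in Ioc (0:ℝ) 1, vb := lintegral_mono fun t => hle1 t
      _ = vb * volume (Ioc (0:ℝ) 1) := by rw [setLIntegral_const]
      _ = vb := by simp
  have hp2 : ∫⁻ t in Ioi (1:ℝ), μ {y : EuclideanSpace ℝ (Fin n) | t < ‖y‖ ^ (-β)}
      ≤ (∫⁻ t in Ioi (1:ℝ), ENNReal.ofReal (t ^ (-(n:ℝ)/β))) * vb := by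
    rw [← lintegral_mul_const' vb _ hvbfin.ne]
    apply lintegral_mono_ae
    rw [ae_restrict_iff' measurableSet_Ioi]
    exact ae_of_all _ fun t ht => hle2 t (lt_trans one_pos ht)
  have hint : ∫⁻ t in Ioi (1:ℝ), ENNReal.ofReal (t ^ (-(n:ℝ)/β)) < ⊤ := by
    apply Integrable.lintegral_lt_top
    apply integrableOn_Ioi_rpow_of_lt _ one_pos
    rw [div_lt_iff₀ hβ0]
    linarith
  calc (∫⁻ t in Ioc (0:ℝ) 1, μ {y : EuclideanSpace ℝ (Fin n) | t < ‖y‖ ^ (-β)})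
        + ∫⁻ t in Ioi (1:ℝ), μ {y : EuclideanSpace ℝ (Fin n) | t < ‖y‖ ^ (-β)}
      ≤ vb + (∫⁻ t in Ioi (1:ℝ), ENNReal.ofReal (t ^ (-(n:ℝ)/β))) * vb :=
        add_le_add hp1 hp2
    _ < ⊤ := by
        apply ENNReal.add_lt_top.2
        exact ⟨hvbfin, ENNReal.mul_lt_top hint hvbfin⟩

lemma stmt18_kernel_translate (n : ℕ) (x : EuclideanSpace ℝ (Fin n)) {s : ℝ} (hs : 0 < s) :
    ∫⁻ y : EuclideanSpace ℝ (Fin n), ENNReal.ofReal ((‖x - y‖ + s) ^ (-((n:ℝ)+1)))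
      = ENNReal.ofReal (s⁻¹) * stmt18K1 n := by
  rw [← stmt18_kernel_mass n hs]
  have hf : Measurable fun z : EuclideanSpace ℝ (Fin n) =>
      ENNReal.ofReal ((‖z‖ + s) ^ (-((n:ℝ)+1))) := by fun_prop
  conv_rhs => rw [← Measure.map_sub_left_eq_self
    (volume : Measure (EuclideanSpace ℝ (Fin n))) x]
  rw [lintegral_map hf (by fun_prop)]

lemma stmt18_inner_bound (n : ℕ) {β : ℝ} (hβ0 : 0 < β)
    {x : EuclideanSpace ℝ (Fin n)} (hx : x ≠ 0) {s : ℝ} (hs : 0 < s) :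
    ∫⁻ y : EuclideanSpace ℝ (Fin n),
        ENNReal.ofReal ((‖x - y‖ + s) ^ (-((n:ℝ)+1))) * ENNReal.ofReal (‖y‖ ^ (-β))
      ≤ ENNReal.ofReal ((‖x‖/2) ^ (-β)) * ENNReal.ofReal (s⁻¹)
        * (stmt18K1 n + stmt18K2 n β) := by
  set a : ℝ := ‖x‖/2 with hadef
  have ha : 0 < a := by
    have := norm_pos_iff.2 hx
    positivity
  set F : EuclideanSpace ℝ (Fin n) → ℝ≥0∞ := fun y =>
    ENNReal.ofReal ((‖x - y‖ + s) ^ (-((n:ℝ)+1))) * ENNReal.ofReal (‖y‖ ^ (-β)) with hF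
  have hsplit : ∫⁻ y, F y = (∫⁻ y in ball (0 : EuclideanSpace ℝ (Fin n)) a, F y)
      + ∫⁻ y in (ball (0 : EuclideanSpace ℝ (Fin n)) a)ᶜ, F y :=
    (lintegral_add_compl F measurableSet_ball).symm
  rw [hsplit]
  have hBc : ∫⁻ y in (ball (0 : EuclideanSpace ℝ (Fin n)) a)ᶜ, F y
      ≤ ENNReal.ofReal (a ^ (-β)) * ENNReal.ofReal (s⁻¹) * stmt18K1 n := by
    have hstep : ∫⁻ y in (ball (0 : EuclideanSpace ℝ (Fin n)) a)ᶜ, F y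
        ≤ ∫⁻ y in (ball (0 : EuclideanSpace ℝ (Fin n)) a)ᶜ,
            ENNReal.ofReal (a ^ (-β)) * ENNReal.ofReal ((‖x - y‖ + s) ^ (-((n:ℝ)+1))) := by
      apply lintegral_mono_ae
      rw [ae_restrict_iff' measurableSet_ball.compl]
      apply ae_of_all
      intro y hy
      simp only [mem_compl_iff, mem_ball, dist_zero_right, not_lt] at hy
      simp only [hF]
      rw [mul_comm (ENNReal.ofReal (a ^ (-β)))]
      exact mul_le_mul_right (ENNReal.ofReal_le_ofReal
        (Real.rpow_le_rpow_of_nonpos ha hy (by linarith))) _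
    refine hstep.trans ?_
    rw [lintegral_const_mul' _ _ ofReal_ne_top]
    calc ENNReal.ofReal (a ^ (-β)) *
          ∫⁻ y in (ball (0 : EuclideanSpace ℝ (Fin n)) a)ᶜ,
            ENNReal.ofReal ((‖x - y‖ + s) ^ (-((n:ℝ)+1)))
        ≤ ENNReal.ofReal (a ^ (-β)) *
          ∫⁻ y : EuclideanSpace ℝ (Fin n), ENNReal.ofReal ((‖x - y‖ + s) ^ (-((n:ℝ)+1))) :=
          mul_le_mul_right (setLIntegral_le_lintegral _ _) _
      _ = ENNReal.ofReal (a ^ (-β)) * (ENNReal.ofReal (s⁻¹) * stmt18K1 n) := by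
          rw [stmt18_kernel_translate n x hs]
      _ = ENNReal.ofReal (a ^ (-β)) * ENNReal.ofReal (s⁻¹) * stmt18K1 n := by ring
  have hB : ∫⁻ y in ball (0 : EuclideanSpace ℝ (Fin n)) a, F y
      ≤ ENNReal.ofReal (a ^ (-β)) * ENNReal.ofReal (s⁻¹) * stmt18K2 n β := by
    have hstep : ∫⁻ y in ball (0 : EuclideanSpace ℝ (Fin n)) a, F y
        ≤ ∫⁻ y in ball (0 : EuclideanSpace ℝ (Fin n)) a,
            ENNReal.ofReal ((a + s) ^ (-((n:ℝ)+1))) * ENNReal.ofReal (‖y‖ ^ (-β)) := by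
      apply lintegral_mono_ae
      rw [ae_restrict_iff' measurableSet_ball]
      apply ae_of_all
      intro y hy
      simp only [mem_ball, dist_zero_right] at hy
      rw [hF]
      apply mul_le_mul_left
      apply ENNReal.ofReal_le_ofReal
      apply Real.rpow_le_rpow_of_nonpos (by linarith) _ (by linarith)
      have : a ≤ ‖x - y‖ := by
        have h1 : ‖x‖ - ‖y‖ ≤ ‖x - y‖ := norm_sub_norm_le x y
        have h2 : ‖x‖ = 2 * a := by rw [hadef]; ring
        linarith
      linarith
    refine hstep.trans ?_
    rw [lintegral_const_mul' _ _ ofReal_ne_top, stmt18_ball_mass n β ha, ← mul_assoc]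
    apply mul_le_mul_left
    rw [← ENNReal.ofReal_mul (by positivity), ← ENNReal.ofReal_mul (by positivity)]
    apply ENNReal.ofReal_le_ofReal
    have key : (a + s) ^ (-((n:ℝ)+1)) ≤ a ^ (-(n:ℝ)) * s⁻¹ := by
      have h1 : a ^ ((n:ℝ)) * s ≤ (a + s) ^ ((n:ℝ)+1) := by
        rw [Real.rpow_add (by linarith) _ 1, Real.rpow_one]
        have h2 : a ^ ((n:ℝ)) ≤ (a + s) ^ ((n:ℝ)) :=
          Real.rpow_le_rpow ha.le (by linarith) (Nat.cast_nonneg n)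
        nlinarith [Real.rpow_pos_of_pos ha (n:ℝ),
          Real.rpow_pos_of_pos (show (0:ℝ) < a + s by linarith) (n:ℝ)]
      have h2 : (1:ℝ)/(a + s)^((n:ℝ)+1) ≤ 1/(a^((n:ℝ)) * s) :=
        one_div_le_one_div_of_le (mul_pos (Real.rpow_pos_of_pos ha _) hs) h1
      calc (a+s)^(-((n:ℝ)+1)) = 1/(a+s)^((n:ℝ)+1) := by
            rw [Real.rpow_neg (by linarith : (0:ℝ) ≤ a + s), one_div]
        _ ≤ 1/(a^((n:ℝ))*s) := h2
        _ = a^(-(n:ℝ)) * s⁻¹ := by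
            rw [Real.rpow_neg ha.le]
            field_simp
    calc (a + s) ^ (-((n:ℝ)+1)) * a ^ ((n:ℝ) - β)
        ≤ (a ^ (-(n:ℝ)) * s⁻¹) * a ^ ((n:ℝ) - β) :=
          mul_le_mul_of_nonneg_right key (Real.rpow_nonneg ha.le _)
      _ = a ^ (-β) * s⁻¹ := by
          rw [show a ^ (-(n:ℝ)) * s⁻¹ * a ^ ((n:ℝ) - β)
              = (a ^ (-(n:ℝ)) * a ^ ((n:ℝ) - β)) * s⁻¹ by ring, ← Real.rpow_add ha,
            show -(n:ℝ) + ((n:ℝ) - β) = -β by ring]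
  calc (∫⁻ y in ball (0 : EuclideanSpace ℝ (Fin n)) a, F y)
        + ∫⁻ y in (ball (0 : EuclideanSpace ℝ (Fin n)) a)ᶜ, F y
      ≤ ENNReal.ofReal (a ^ (-β)) * ENNReal.ofReal (s⁻¹) * stmt18K2 n β
        + ENNReal.ofReal (a ^ (-β)) * ENNReal.ofReal (s⁻¹) * stmt18K1 n := add_le_add hB hBc
    _ = ENNReal.ofReal (a ^ (-β)) * ENNReal.ofReal (s⁻¹) * (stmt18K1 n + stmt18K2 n β) := by
        ring

lemma stmt18_rpow_lint_Ioc {a b : ℝ} (ha' : -1 < -a) (hb : 0 < b) :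
    ∫⁻ τ in Ioc (0:ℝ) b, ENNReal.ofReal (τ ^ (-a)) = ENNReal.ofReal (b ^ (1-a) / (1-a)) := by
  have hInt : IntegrableOn (fun τ : ℝ => τ ^ (-a)) (Ioc 0 b) := by
    rw [← intervalIntegrable_iff_integrableOn_Ioc_of_le hb.le]
    exact intervalIntegral.intervalIntegrable_rpow' ha'
  have hnn : (0 : ℝ → ℝ) ≤ᶠ[ae (volume.restrict (Ioc (0:ℝ) b))] fun τ => τ ^ (-a) := by
    filter_upwards [ae_restrict_mem measurableSet_Ioc] with τ hτ
    exact Real.rpow_nonneg hτ.1.le _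
  rw [← ofReal_integral_eq_lintegral_ofReal hInt hnn]
  congr 1
  rw [← intervalIntegral.integral_of_le hb.le, integral_rpow (Or.inl ha'),
    Real.zero_rpow (by linarith), show -a + 1 = 1 - a by ring]
  ring

lemma stmt18_time_bound {a t : ℝ} (ha0 : 0 < a) (ha : a < 1/2) (ht : 0 < t) :
    ∫⁻ τ in Ioo 0 t, ENNReal.ofReal (τ ^ (-a) * (t - τ) ^ (-((1:ℝ)/2)))
      ≤ ENNReal.ofReal ((1/(1-a) + 2) * t ^ ((1:ℝ)/2 - a)) := by
  have ht2 : (0:ℝ) < t/2 := by linarith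
  have h2 : (0:ℝ) < 1 - a := by linarith
  have hsub : Ioo (0:ℝ) t ⊆ Ioc 0 (t/2) ∪ Ioo (t/2) t := by
    intro τ hτ
    rcases le_or_gt τ (t/2) with h | h
    · exact Or.inl ⟨hτ.1, h⟩
    · exact Or.inr ⟨h, hτ.2⟩
  have hdisj : Disjoint (Ioc (0:ℝ) (t/2)) (Ioo (t/2) t) := by
    rw [disjoint_left]
    rintro τ ⟨_, h1⟩ ⟨h2, _⟩
    linarith
  calc ∫⁻ τ in Ioo 0 t, ENNReal.ofReal (τ ^ (-a) * (t - τ) ^ (-((1:ℝ)/2)))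
      ≤ ∫⁻ τ in Ioc 0 (t/2) ∪ Ioo (t/2) t,
          ENNReal.ofReal (τ ^ (-a) * (t - τ) ^ (-((1:ℝ)/2))) := lintegral_mono_set hsub
    _ = (∫⁻ τ in Ioc 0 (t/2), ENNReal.ofReal (τ ^ (-a) * (t - τ) ^ (-((1:ℝ)/2))))
        + ∫⁻ τ in Ioo (t/2) t, ENNReal.ofReal (τ ^ (-a) * (t - τ) ^ (-((1:ℝ)/2))) :=
        lintegral_union measurableSet_Ioo hdisj
    _ ≤ ENNReal.ofReal ((t/2) ^ ((1:ℝ)/2 - a) / (1-a)) +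
        ENNReal.ofReal (2 * (t/2) ^ ((1:ℝ)/2 - a)) := by
        gcongr ?_ + ?_
        · calc ∫⁻ τ in Ioc 0 (t/2), ENNReal.ofReal (τ ^ (-a) * (t - τ) ^ (-((1:ℝ)/2)))
              ≤ ∫⁻ τ in Ioc 0 (t/2),
                  ENNReal.ofReal (τ ^ (-a)) * ENNReal.ofReal ((t/2) ^ (-((1:ℝ)/2))) := by
                apply lintegral_mono_ae
                rw [ae_restrict_iff' measurableSet_Ioc]
                apply ae_of_all
                intro τ hτ
                rw [← ENNReal.ofReal_mul (Real.rpow_nonneg hτ.1.le _)]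
                apply ENNReal.ofReal_le_ofReal
                apply mul_le_mul_of_nonneg_left _ (Real.rpow_nonneg hτ.1.le _)
                apply Real.rpow_le_rpow_of_nonpos ht2 (by linarith [hτ.2]) (by norm_num)
            _ = ENNReal.ofReal ((t/2) ^ (1-a) / (1-a))
                * ENNReal.ofReal ((t/2) ^ (-((1:ℝ)/2))) := by
                rw [lintegral_mul_const' _ _ ofReal_ne_top,
                  stmt18_rpow_lint_Ioc (by linarith) ht2]
            _ = ENNReal.ofReal ((t/2) ^ ((1:ℝ)/2 - a) / (1-a)) := by
                rw [← ENNReal.ofReal_mul (div_nonneg (Real.rpow_nonneg ht2.le _) h2.le)]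
                congr 1
                rw [div_mul_eq_mul_div, ← Real.rpow_add ht2,
                  show 1 - a + -((1:ℝ)/2) = (1:ℝ)/2 - a by ring]
        · calc ∫⁻ τ in Ioo (t/2) t, ENNReal.ofReal (τ ^ (-a) * (t - τ) ^ (-((1:ℝ)/2)))
              ≤ ∫⁻ τ in Ioc (t/2) t,
                  ENNReal.ofReal ((t/2) ^ (-a)) * ENNReal.ofReal ((t - τ) ^ (-((1:ℝ)/2))) := by
                refine (lintegral_mono_set Ioo_subset_Ioc_self).trans ?_
                apply lintegral_mono_ae
                rw [ae_restrict_iff' measurableSet_Ioc]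
                apply ae_of_all
                intro τ hτ
                rw [← ENNReal.ofReal_mul (Real.rpow_nonneg ht2.le _)]
                apply ENNReal.ofReal_le_ofReal
                apply mul_le_mul_of_nonneg_right _ (Real.rpow_nonneg (by linarith [hτ.2]) _)
                apply Real.rpow_le_rpow_of_nonpos ht2 hτ.1.le (by linarith)
            _ = ENNReal.ofReal ((t/2) ^ (-a))
                * ∫⁻ τ in Ioc (t/2) t, ENNReal.ofReal ((t - τ) ^ (-((1:ℝ)/2))) :=
                lintegral_const_mul' _ _ ofReal_ne_top
            _ ≤ ENNReal.ofReal (2 * (t/2) ^ ((1:ℝ)/2 - a)) := by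
                have h0 : IntervalIntegrable (fun u : ℝ => u ^ (-((1:ℝ)/2))) volume 0 (t/2) :=
                  intervalIntegral.intervalIntegrable_rpow' (by norm_num)
                have hII := (h0.comp_sub_left t).symm
                rw [show t - t/2 = t/2 by ring, sub_zero] at hII
                have hInt : IntegrableOn (fun τ : ℝ => (t - τ) ^ (-((1:ℝ)/2))) (Ioc (t/2) t) := by
                  rw [← intervalIntegrable_iff_integrableOn_Ioc_of_le (by linarith)]
                  exact hII
                have hnn : (0 : ℝ → ℝ) ≤ᶠ[ae (volume.restrict (Ioc (t/2) t))]
                    fun τ => (t - τ) ^ (-((1:ℝ)/2)) := by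
                  filter_upwards [ae_restrict_mem measurableSet_Ioc] with τ hτ
                  exact Real.rpow_nonneg (by linarith [hτ.2]) _
                rw [← ofReal_integral_eq_lintegral_ofReal hInt hnn,
                  ← ENNReal.ofReal_mul (Real.rpow_nonneg ht2.le _)]
                apply ENNReal.ofReal_le_ofReal
                have hval : ∫ τ in Ioc (t/2) t, (t - τ) ^ (-((1:ℝ)/2))
                    = 2 * (t/2) ^ ((1:ℝ)/2) := by
                  rw [← intervalIntegral.integral_of_le (by linarith : t/2 ≤ t),
                    intervalIntegral.integral_comp_sub_left (fun u : ℝ => u ^ (-((1:ℝ)/2))) t,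
                    show t - t = 0 by ring, show t - t/2 = t/2 by ring,
                    integral_rpow (Or.inl (by norm_num)),
                    Real.zero_rpow (by norm_num),
                    show -((1:ℝ)/2) + 1 = 1/2 by norm_num]
                  ring
                rw [hval, show (t/2) ^ (-a) * (2 * (t/2) ^ ((1:ℝ)/2))
                    = 2 * ((t/2) ^ (-a) * (t/2) ^ ((1:ℝ)/2)) by ring,
                  ← Real.rpow_add ht2, show -a + (1:ℝ)/2 = (1:ℝ)/2 - a by ring]
    _ ≤ ENNReal.ofReal ((1/(1-a) + 2) * t ^ ((1:ℝ)/2 - a)) := by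
        rw [← ENNReal.ofReal_add (div_nonneg (Real.rpow_nonneg ht2.le _) h2.le) (by positivity)]
        apply ENNReal.ofReal_le_ofReal
        have h1 : (t/2) ^ ((1:ℝ)/2 - a) ≤ t ^ ((1:ℝ)/2 - a) :=
          Real.rpow_le_rpow ht2.le (by linarith) (by linarith)
        have h5 : (t/2) ^ ((1:ℝ)/2-a)/(1-a) ≤ t^((1:ℝ)/2-a)/(1-a) := by gcongr
        calc (t/2) ^ ((1:ℝ)/2 - a) / (1-a) + 2 * (t/2) ^ ((1:ℝ)/2 - a)
            ≤ t ^ ((1:ℝ)/2 - a) / (1-a) + 2 * t ^ ((1:ℝ)/2 - a) := by linarith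
          _ = (1 / (1-a) + 2) * t ^ ((1:ℝ)/2 - a) := by
              field_simp

end Stmt18Aux

set_option maxHeartbeats 1600000 in
/-- for `p > 2n`, `α = 1 - n/p`, if
`|u(τ,y)| ≤ M τ^{-n/(2p)} |y|^{-α}`, then
`ū(t,x) ≤ c M² |x|^{-2+2n/p} t^{1/2-n/p}` pointwise, and consequently
`‖ū(t)‖_{(np/(2(p-n)),∞)} ≤ c M² t^{1/2-n/p}`. -/
theorem stmt18 (n : ℕ) (hn : 3 ≤ n) (p : ℝ) (hp : 2 * (n : ℝ) < p)
    (α : ℝ) (hα : α = 1 - n / p) (T M : ℝ) (hT : 0 < T) (hM : 0 < M)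
    (u : ℝ → EuclideanSpace ℝ (Fin n) → ℝ) (hu : Measurable (Function.uncurry u))
    (hub : ∀ τ ∈ Set.Ioo 0 T, ∀ y : EuclideanSpace ℝ (Fin n), y ≠ 0 →
      |u τ y| ≤ M * τ ^ (-(n : ℝ) / (2 * p)) * ‖y‖ ^ (-α)) :
    ∃ c > 0, ∀ t ∈ Set.Ioo 0 T,
      (∀ x : EuclideanSpace ℝ (Fin n), x ≠ 0 →
        uBar n u t x ≤ ENNReal.ofReal
          (c * M ^ 2 * ‖x‖ ^ (-2 + 2 * (n : ℝ) / p) * t ^ ((1 : ℝ) / 2 - n / p))) ∧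
      weakNorm volume ((n : ℝ) * p / (2 * (p - n)))
          (fun x => (uBar n u t x).toReal) ≤
        ENNReal.ofReal (c * M ^ 2 * t ^ ((1 : ℝ) / 2 - n / p)) := by
  have hn3 : (3:ℝ) ≤ (n:ℝ) := by exact_mod_cast hn
  have hp0 : (0:ℝ) < p := by linarith
  set a : ℝ := (n:ℝ)/p with hadef
  have ha0 : 0 < a := div_pos (by linarith) hp0
  have ha2 : a < 1/2 := by
    rw [hadef, div_lt_iff₀ hp0]
    linarith
  set β : ℝ := 2 - 2*a with hβdef
  have hβ0 : 0 < β := by rw [hβdef]; linarith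
  have hβn : β < n := by rw [hβdef]; linarith
  have hKfin : stmt18K1 n + stmt18K2 n β < ⊤ :=
    ENNReal.add_lt_top.2 ⟨stmt18K1_lt_top n, stmt18K2_lt_top n (by omega) hβ0 hβn⟩
  set Ct : ℝ := 1/(1-a) + 2 with hCtdef
  have h1a : (0:ℝ) < 1 - a := by linarith
  have hCt : 0 < Ct := by rw [hCtdef]; positivity
  set Ktr : ℝ := (stmt18K1 n + stmt18K2 n β).toReal with hKtrdef
  have hKtr : 0 ≤ Ktr := ENNReal.toReal_nonneg
  have hKtr' : stmt18K1 n + stmt18K2 n β = ENNReal.ofReal Ktr :=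
    (ENNReal.ofReal_toReal hKfin.ne).symm
  set c0 : ℝ := 2 ^ β * Ktr * Ct + 1 with hc0def
  have h2β : (0:ℝ) ≤ 2 ^ β := Real.rpow_nonneg (by norm_num) _
  have hc0 : 1 ≤ c0 := by
    rw [hc0def]
    nlinarith [mul_nonneg (mul_nonneg h2β hKtr) hCt.le]
  -- the pointwise bound with constant c0
  have hpt : ∀ t ∈ Set.Ioo 0 T, ∀ x : EuclideanSpace ℝ (Fin n), x ≠ 0 →
      uBar n u t x ≤ ENNReal.ofReal (c0 * M^2 * ‖x‖ ^ (-β) * t ^ ((1:ℝ)/2 - a)) := by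
    intro t htt x hx
    obtain ⟨ht0, htT⟩ := htt
    have hxn : 0 < ‖x‖ := norm_pos_iff.2 hx
    have hae : ∀ᵐ (y : EuclideanSpace ℝ (Fin n)) ∂volume, y ≠ 0 := by
      have hne : Nonempty (Fin n) := ⟨⟨0, by omega⟩⟩
      rw [MeasureTheory.ae_iff]
      simpa using measure_singleton (0 : EuclideanSpace ℝ (Fin n))
    set CC : ℝ≥0∞ := ENNReal.ofReal (M^2 * (‖x‖/2) ^ (-β)) * (stmt18K1 n + stmt18K2 n β)
      with hCC
    have hCCne : CC ≠ ⊤ := ENNReal.mul_ne_top ofReal_ne_top hKfin.ne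
    have hmain : ∀ τ ∈ Set.Ioo (0:ℝ) t,
        (∫⁻ y, ENNReal.ofReal
            ((‖x - y‖ + (t - τ) ^ ((1:ℝ)/2)) ^ (-((n:ℝ)+1)) * u τ y ^ 2))
          ≤ CC * ENNReal.ofReal (τ ^ (-a) * (t - τ) ^ (-((1:ℝ)/2))) := by
      intro τ hτ
      obtain ⟨hτ0, hτt⟩ := hτ
      have hts : 0 < t - τ := by linarith
      set s : ℝ := (t - τ) ^ ((1:ℝ)/2) with hsdef
      have hs : 0 < s := Real.rpow_pos_of_pos hts _
      have hsinv : s⁻¹ = (t - τ) ^ (-((1:ℝ)/2)) := by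
        rw [Real.rpow_neg hts.le]
      have hstep1 : ∀ y : EuclideanSpace ℝ (Fin n), y ≠ 0 →
          ENNReal.ofReal ((‖x - y‖ + s) ^ (-((n:ℝ)+1)) * u τ y ^ 2)
            ≤ ENNReal.ofReal (M^2 * τ ^ (-a)) *
              (ENNReal.ofReal ((‖x - y‖ + s) ^ (-((n:ℝ)+1)))
                * ENNReal.ofReal (‖y‖ ^ (-β))) := by
        intro y hy
        have hyn : 0 < ‖y‖ := norm_pos_iff.2 hy
        have hk : (0:ℝ) ≤ (‖x - y‖ + s) ^ (-((n:ℝ)+1)) :=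
          Real.rpow_nonneg (by positivity) _
        have hu2 : u τ y ^ 2 ≤ M^2 * τ ^ (-a) * ‖y‖ ^ (-β) := by
          have h1 := hub τ ⟨hτ0, by linarith⟩ y hy
          have h2 : |u τ y| ^ 2 ≤ (M * τ ^ (-(n:ℝ)/(2*p)) * ‖y‖ ^ (-α)) ^ 2 :=
            pow_le_pow_left₀ (abs_nonneg _) h1 2
          have e2 : (τ ^ (-(n:ℝ)/(2*p))) ^ 2 = τ ^ (-a) := by
            rw [sq, ← Real.rpow_add hτ0]
            congr 1
            rw [hadef]
            field_simp
            ring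
          have y2 : (‖y‖ ^ (-α)) ^ 2 = ‖y‖ ^ (-β) := by
            rw [sq, ← Real.rpow_add hyn]
            congr 1
            rw [hα, hβdef, hadef]
            ring
          calc u τ y ^ 2 = |u τ y| ^ 2 := (sq_abs _).symm
            _ ≤ (M * τ ^ (-(n:ℝ)/(2*p)) * ‖y‖ ^ (-α)) ^ 2 := h2
            _ = M^2 * τ ^ (-a) * ‖y‖ ^ (-β) := by rw [mul_pow, mul_pow, e2, y2]
        calc ENNReal.ofReal ((‖x - y‖ + s) ^ (-((n:ℝ)+1)) * u τ y ^ 2)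
            = ENNReal.ofReal ((‖x - y‖ + s) ^ (-((n:ℝ)+1)))
              * ENNReal.ofReal (u τ y ^ 2) := ENNReal.ofReal_mul hk
          _ ≤ ENNReal.ofReal ((‖x - y‖ + s) ^ (-((n:ℝ)+1))) *
              ENNReal.ofReal (M^2 * τ ^ (-a) * ‖y‖ ^ (-β)) :=
              mul_le_mul_right (ENNReal.ofReal_le_ofReal hu2) _
          _ = ENNReal.ofReal ((‖x - y‖ + s) ^ (-((n:ℝ)+1))) *
              (ENNReal.ofReal (M^2 * τ ^ (-a)) * ENNReal.ofReal (‖y‖ ^ (-β))) := by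
              rw [ENNReal.ofReal_mul (mul_nonneg (sq_nonneg M) (Real.rpow_nonneg hτ0.le _))]
          _ = _ := by ring
      calc ∫⁻ y, ENNReal.ofReal ((‖x - y‖ + s) ^ (-((n:ℝ)+1)) * u τ y ^ 2)
          ≤ ∫⁻ y, ENNReal.ofReal (M^2 * τ ^ (-a)) *
              (ENNReal.ofReal ((‖x - y‖ + s) ^ (-((n:ℝ)+1)))
                * ENNReal.ofReal (‖y‖ ^ (-β))) := by
            apply lintegral_mono_ae
            filter_upwards [hae] with y hy
            exact hstep1 y hy
        _ = ENNReal.ofReal (M^2 * τ ^ (-a)) *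
            ∫⁻ y, ENNReal.ofReal ((‖x - y‖ + s) ^ (-((n:ℝ)+1)))
              * ENNReal.ofReal (‖y‖ ^ (-β)) :=
            lintegral_const_mul' _ _ ofReal_ne_top
        _ ≤ ENNReal.ofReal (M^2 * τ ^ (-a)) *
            (ENNReal.ofReal ((‖x‖/2) ^ (-β)) * ENNReal.ofReal (s⁻¹)
              * (stmt18K1 n + stmt18K2 n β)) :=
            mul_le_mul_right (stmt18_inner_bound n hβ0 hx hs) _
        _ = CC * ENNReal.ofReal (τ ^ (-a) * (t - τ) ^ (-((1:ℝ)/2))) := by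
            rw [hsinv, hCC,
              ENNReal.ofReal_mul (sq_nonneg M),
              ENNReal.ofReal_mul (sq_nonneg M),
              ENNReal.ofReal_mul (Real.rpow_nonneg hτ0.le _)]
            ring
    calc uBar n u t x
        ≤ ∫⁻ τ in Set.Ioo 0 t,
            CC * ENNReal.ofReal (τ ^ (-a) * (t - τ) ^ (-((1:ℝ)/2))) := by
          rw [uBar]
          apply lintegral_mono_ae
          rw [ae_restrict_iff' measurableSet_Ioo]
          exact ae_of_all _ hmain
      _ = CC * ∫⁻ τ in Set.Ioo 0 t,
            ENNReal.ofReal (τ ^ (-a) * (t - τ) ^ (-((1:ℝ)/2))) :=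
          lintegral_const_mul' _ _ hCCne
      _ ≤ CC * ENNReal.ofReal (Ct * t ^ ((1:ℝ)/2 - a)) :=
          mul_le_mul_right (stmt18_time_bound ha0 ha2 ht0) _
      _ ≤ ENNReal.ofReal (c0 * M^2 * ‖x‖ ^ (-β) * t ^ ((1:ℝ)/2 - a)) := by
          rw [hCC, hKtr', ← ENNReal.ofReal_mul (by positivity),
            ← ENNReal.ofReal_mul (by positivity)]
          apply ENNReal.ofReal_le_ofReal
          have hsplit2 : (‖x‖/2) ^ (-β) = 2^β * ‖x‖^(-β) := by
            rw [Real.div_rpow (norm_nonneg x) (by norm_num),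
              Real.rpow_neg (by norm_num : (0:ℝ) ≤ 2)]
            field_simp
          rw [hsplit2, hc0def]
          have hX : 0 ≤ M^2 * ‖x‖^(-β) * t ^ ((1:ℝ)/2 - a) := by
            have := Real.rpow_nonneg (norm_nonneg x) (-β)
            have := Real.rpow_nonneg ht0.le ((1:ℝ)/2 - a)
            positivity
          nlinarith [hX, mul_nonneg (mul_nonneg h2β hKtr) hCt.le]
  -- weak-norm constant
  set vb : ℝ≥0∞ := volume (Metric.ball (0 : EuclideanSpace ℝ (Fin n)) 1) with hvbdef
  set r : ℝ := (n:ℝ)*p/(2*(p-n)) with hrdef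
  have hr0 : 0 < r := by
    rw [hrdef]
    apply div_pos
    · nlinarith
    · nlinarith
  have hpn : (0:ℝ) < p - n := by linarith
  have hβr : β * r = (n:ℝ) := by
    rw [hβdef, hrdef, hadef]
    field_simp
  set B : ℝ≥0∞ := vb ^ ((1:ℝ)/r) with hBdef
  have hBfin : B ≠ ⊤ := by
    rw [hBdef]
    exact (ENNReal.rpow_lt_top_of_nonneg (by positivity) measure_ball_lt_top.ne).ne
  set bW : ℝ := B.toReal with hbWdef
  have hbW : 0 ≤ bW := ENNReal.toReal_nonneg
  have hB' : B = ENNReal.ofReal bW := (ENNReal.ofReal_toReal hBfin).symm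
  refine ⟨c0 * (bW + 1), by nlinarith, ?_⟩
  intro t htt
  obtain ⟨ht0, htT⟩ := htt
  have hexp1 : (-2 + 2 * (n:ℝ) / p) = -β := by
    rw [hβdef, hadef]
    ring
  have htγ : (0:ℝ) ≤ t ^ ((1:ℝ)/2 - a) := Real.rpow_nonneg ht0.le _
  constructor
  · intro x hx
    refine (hpt t ⟨ht0, htT⟩ x hx).trans (ENNReal.ofReal_le_ofReal ?_)
    rw [hexp1]
    have h1 : (0:ℝ) ≤ ‖x‖ ^ (-β) := Real.rpow_nonneg (norm_nonneg x) _
    have hX : (0:ℝ) ≤ M^2 * ‖x‖ ^ (-β) * t ^ ((1:ℝ)/2 - a) :=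
      mul_nonneg (mul_nonneg (sq_nonneg M) h1) htγ
    nlinarith [mul_nonneg (mul_nonneg (le_trans zero_le_one hc0) hbW) hX]
  · -- weak norm part
    simp only [weakNorm]
    apply iSup₂_le
    intro l hl
    set A : ℝ := c0 * M^2 * t ^ ((1:ℝ)/2 - a) with hAdef
    have hA : 0 < A := by
      rw [hAdef]
      have h9 : (0:ℝ) < t ^ ((1:ℝ)/2 - a) := Real.rpow_pos_of_pos ht0 _
      exact mul_pos (mul_pos (by linarith) (pow_pos hM 2)) h9
    set R : ℝ := (A/l) ^ ((1:ℝ)/β) with hRdef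
    have hR0 : 0 < R := Real.rpow_pos_of_pos (div_pos hA hl) _
    have hsubset : {x : EuclideanSpace ℝ (Fin n) | l < |(uBar n u t x).toReal|}
        ⊆ Metric.closedBall 0 R := by
      intro x hxmem
      simp only [Set.mem_setOf_eq] at hxmem
      rcases eq_or_ne x 0 with rfl | hx0
      · exact Metric.mem_closedBall_self hR0.le
      · have hxn : 0 < ‖x‖ := norm_pos_iff.2 hx0
        have hb := hpt t ⟨ht0, htT⟩ x hx0
        have hnn : (0:ℝ) ≤ c0 * M^2 * ‖x‖ ^ (-β) * t ^ ((1:ℝ)/2 - a) := by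
          have h1 : (0:ℝ) ≤ ‖x‖ ^ (-β) := Real.rpow_nonneg (norm_nonneg x) _
          nlinarith
        have hfx : (uBar n u t x).toReal ≤ c0 * M^2 * ‖x‖ ^ (-β) * t ^ ((1:ℝ)/2 - a) :=
          ENNReal.toReal_le_of_le_ofReal hnn hb
        rw [abs_of_nonneg ENNReal.toReal_nonneg] at hxmem
        have hlt : l < A * ‖x‖ ^ (-β) := by
          have : c0 * M^2 * ‖x‖ ^ (-β) * t ^ ((1:ℝ)/2 - a) = A * ‖x‖ ^ (-β) := by
            rw [hAdef]; ring
          linarith [hxmem.trans_le (hfx.trans_eq this)]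
        have h3 : 0 < ‖x‖ ^ β := Real.rpow_pos_of_pos hxn β
        have h1 : ‖x‖ ^ β < A / l := by
          rw [Real.rpow_neg hxn.le] at hlt
          rw [lt_div_iff₀ hl]
          calc ‖x‖ ^ β * l < ‖x‖ ^ β * (A * (‖x‖ ^ β)⁻¹) := by
                apply mul_lt_mul_of_pos_left hlt h3
            _ = A := by field_simp
        have hxR : ‖x‖ < R := by
          have h4 : (‖x‖ ^ β) ^ ((1:ℝ)/β) < (A/l) ^ ((1:ℝ)/β) :=
            Real.rpow_lt_rpow h3.le h1 (by positivity)
          rwa [← Real.rpow_mul hxn.le, mul_one_div, div_self hβ0.ne',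
            Real.rpow_one] at h4
        exact mem_closedBall_zero_iff.2 hxR.le
    have hmeas : volume {x : EuclideanSpace ℝ (Fin n) | l < |(uBar n u t x).toReal|}
        ≤ ENNReal.ofReal (R ^ n) * vb := by
      calc volume {x : EuclideanSpace ℝ (Fin n) | l < |(uBar n u t x).toReal|}
          ≤ volume (Metric.closedBall (0 : EuclideanSpace ℝ (Fin n)) R) :=
            measure_mono hsubset
        _ = ENNReal.ofReal (R ^ Module.finrank ℝ (EuclideanSpace ℝ (Fin n))) * vb := by
            rw [Measure.addHaar_closedBall _ _ hR0.le, hvbdef]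
        _ = ENNReal.ofReal (R ^ n) * vb := by rw [finrank_euclideanSpace_fin]
    have hRn : (R ^ n : ℝ) ^ ((1:ℝ)/r) = A / l := by
      rw [← Real.rpow_natCast R n, ← Real.rpow_mul hR0.le, hRdef,
        ← Real.rpow_mul (div_pos hA hl).le]
      have : (1:ℝ)/β * ((n:ℝ) * ((1:ℝ)/r)) = 1 := by
        field_simp
        nlinarith [hβr]
      rw [this, Real.rpow_one]
    calc ENNReal.ofReal l
          * volume {x : EuclideanSpace ℝ (Fin n) | l < |(uBar n u t x).toReal|} ^ ((1:ℝ)/r)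
        ≤ ENNReal.ofReal l * (ENNReal.ofReal (R ^ n) * vb) ^ ((1:ℝ)/r) := by
          apply mul_le_mul_right
          exact ENNReal.rpow_le_rpow hmeas (by positivity)
      _ = ENNReal.ofReal l * (ENNReal.ofReal ((R ^ n : ℝ) ^ ((1:ℝ)/r)) * B) := by
          rw [ENNReal.mul_rpow_of_nonneg _ _ (by positivity),
            ENNReal.ofReal_rpow_of_nonneg (by positivity) (by positivity), hBdef]
      _ = ENNReal.ofReal l * ENNReal.ofReal (A/l) * B := by rw [hRn]; ring
      _ = ENNReal.ofReal A * B := by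
          rw [← ENNReal.ofReal_mul hl.le, mul_comm l (A/l), div_mul_cancel₀ A hl.ne']
      _ = ENNReal.ofReal (A * bW) := by
          rw [hB', ← ENNReal.ofReal_mul hA.le]
      _ ≤ ENNReal.ofReal (c0 * (bW + 1) * M ^ 2 * t ^ ((1:ℝ)/2 - a)) := by
          apply ENNReal.ofReal_le_ofReal
          rw [hAdef]
          nlinarith [mul_nonneg (sq_nonneg M) htγ, hc0]
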